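/- arXiv:2210.02988 — 2 statements merged into one kernel-verified Lean document; each statement's English description precedes it below -/
import Mathlib

section
/- Let G be an amply regular graph with parameters (n, d, α, β) with β > α ≥ 1, and let σ_{n-1} denote the second largest eigenvalue of the adjacency matrix of G. Then σ_{n-1} ≤ d - 3. -/
variable {V : Type*}

/-- An amply regular graph with parameters `(n, d, a, b)`. -/
def IsAmplyRegular (G : SimpleGraph V) [Fintype V] [DecidableEq V] [DecidableRel G.Adj]
    (n d a b : ℕ) : Prop :=
  Fintype.card V = n ∧ G.IsRegularOfDegree d ∧
  (∀ x y : V, G.Adj x y → (G.neighborFinset x ∩ G.neighborFinset y).card = a) ∧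
  (∀ x y : V, G.dist x y = 2 → (G.neighborFinset x ∩ G.neighborFinset y).card = b)

/-- `N_x = Γ(x) \\ ({y} ∪ Γ(y))`: the neighbors of `x` other than `y` and not adjacent
to `y`. (`N_y` is `Nside G y x`.) -/
def Nside (G : SimpleGraph V) [Fintype V] [DecidableEq V] [DecidableRel G.Adj] (x y : V) :
    Finset V := G.neighborFinset x \ insert y (G.neighborFinset y)

/-- `Δ_{xy} = Γ(x) ∩ Γ(y)`: the common neighbors of `x` and `y`. -/
def Delta (G : SimpleGraph V) [Fintype V] [DecidableEq V] [DecidableRel G.Adj] (x y : V) :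
    Finset V := G.neighborFinset x ∩ G.neighborFinset y

section Aux

variable [Fintype V] [DecidableEq V] (G : SimpleGraph V) [DecidableRel G.Adj]

lemma delta_symm (x y : V) : Delta G y x = Delta G x y := by
  simp [Delta, Finset.inter_comm]

lemma notmem_split {x y : V} : y ∉ Delta G x y ∪ Nside G x y := by
  simp [Delta, Nside]

lemma disj_split {x y : V} : Disjoint (Delta G x y) (Nside G x y) := by
  rw [Finset.disjoint_left]
  intro a ha hb
  simp only [Delta, Finset.mem_inter, SimpleGraph.mem_neighborFinset] at ha
  simp only [Nside, Finset.mem_sdiff, Finset.mem_insert, SimpleGraph.mem_neighborFinset] at hb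
  exact hb.2 (Or.inr ha.2)

lemma nbr_split {x y : V} (hxy : G.Adj x y) :
    G.neighborFinset x = insert y (Delta G x y ∪ Nside G x y) := by
  ext a
  simp only [Delta, Nside, Finset.mem_insert, Finset.mem_union, Finset.mem_inter,
    Finset.mem_sdiff, SimpleGraph.mem_neighborFinset]
  constructor
  · intro hxa
    by_cases hay : a = y
    · exact Or.inl hay
    · by_cases hya : G.Adj y a
      · exact Or.inr (Or.inl ⟨hxa, hya⟩)
      · exact Or.inr (Or.inr ⟨hxa, by simp [hay, hya]⟩)
  · rintro (rfl | ⟨h, -⟩ | ⟨h, -⟩)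
    exacts [hxy, h, h]

lemma sum_split {x y : V} (hxy : G.Adj x y) (F : V → ℝ) :
    ∑ a ∈ G.neighborFinset x, F a
      = F y + (∑ z ∈ Delta G x y, F z + ∑ u ∈ Nside G x y, F u) := by
  rw [nbr_split G hxy, Finset.sum_insert (notmem_split G), Finset.sum_union (disj_split G)]

lemma card_split {x y : V} (hxy : G.Adj x y) :
    (G.neighborFinset x).card = 1 + ((Delta G x y).card + (Nside G x y).card) := by
  rw [nbr_split G hxy, Finset.card_insert_of_notMem (notmem_split G),
    Finset.card_union_of_disjoint (disj_split G)]
  omega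

lemma cnt {x y : V} (hxy : G.Adj x y) {u : V} (hux : G.Adj u x) :
    (G.neighborFinset u ∩ G.neighborFinset y).card
      = 1 + ((G.neighborFinset u ∩ Delta G y x).card
          + (G.neighborFinset u ∩ Nside G y x).card) := by
  have hxnot : x ∉ Delta G y x ∪ Nside G y x := notmem_split G
  rw [nbr_split G hxy.symm,
    Finset.inter_insert_of_mem ((SimpleGraph.mem_neighborFinset G u x).mpr hux),
    Finset.card_insert_of_notMem (fun hc => hxnot (Finset.mem_of_mem_inter_right hc)),
    Finset.inter_union_distrib_left,
    Finset.card_union_of_disjoint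
      ((disj_split G).mono Finset.inter_subset_right Finset.inter_subset_right)]
  omega

lemma dist_two (hconn : G.Connected) {x y u : V} (hxy : G.Adj x y) (hux : G.Adj u x)
    (huy : u ≠ y) (hnadj : ¬ G.Adj u y) : G.dist u y = 2 := by
  have h2 : G.dist u y ≤ 2 := by
    have := SimpleGraph.dist_le
      (SimpleGraph.Walk.cons hux (SimpleGraph.Walk.cons hxy SimpleGraph.Walk.nil))
    simpa using this
  have h0 : G.dist u y ≠ 0 := fun hc => huy (hconn.dist_eq_zero_iff.mp hc)
  have h1 : G.dist u y ≠ 1 := fun hc => hnadj (SimpleGraph.dist_eq_one_iff_adj.mp hc)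
  omega

lemma sum_ite_adj (s : Finset V) (u : V) (c : ℝ) :
    ∑ w ∈ s, (if G.Adj u w then c else 0) = ((G.neighborFinset u ∩ s).card : ℝ) * c := by
  rw [← Finset.sum_filter]
  have hst : s.filter (fun w => G.Adj u w) = G.neighborFinset u ∩ s := by
    ext a
    simp [SimpleGraph.mem_neighborFinset, and_comm]
  rw [hst, Finset.sum_const, nsmul_eq_mul]

lemma sum_ite_adj' (s : Finset V) (w : V) (c : ℝ) :
    ∑ u ∈ s, (if G.Adj u w then c else 0) = ((G.neighborFinset w ∩ s).card : ℝ) * c := by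
  have h : ∀ u, (if G.Adj u w then c else 0) = (if G.Adj w u then c else 0) := by
    intro u
    exact if_congr (G.adj_comm u w) rfl rfl
  simp_rw [h]
  exact sum_ite_adj G s w c

lemma pair_sum (s t : Finset V) (f : V → ℝ) :
    ∑ u ∈ s, ∑ w ∈ t, (if G.Adj u w then f u - f w else 0)
      = ∑ u ∈ s, ((G.neighborFinset u ∩ t).card : ℝ) * f u
        - ∑ w ∈ t, ((G.neighborFinset w ∩ s).card : ℝ) * f w := by
  have h1 : ∑ u ∈ s, ∑ w ∈ t, (if G.Adj u w then f u - f w else 0)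
      = ∑ u ∈ s, (∑ w ∈ t, (if G.Adj u w then f u else 0)
          - ∑ w ∈ t, (if G.Adj u w then f w else 0)) := by
    apply Finset.sum_congr rfl
    intro u _
    rw [← Finset.sum_sub_distrib]
    apply Finset.sum_congr rfl
    intro w _
    split <;> simp
  rw [h1, Finset.sum_sub_distrib]
  congr 1
  · apply Finset.sum_congr rfl
    intro u _
    exact sum_ite_adj G t u (f u)
  · rw [Finset.sum_comm]
    apply Finset.sum_congr rfl
    intro w _
    exact sum_ite_adj' G s w (f w)

lemma pair_bound (s t : Finset V) (f : V → ℝ) {g : ℝ} (hg : 0 ≤ g)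
    (hlip : ∀ a b : V, G.Adj a b → f a - f b ≤ g) :
    ∑ u ∈ s, ∑ w ∈ t, (if G.Adj u w then f u - f w else 0)
      ≤ ∑ u ∈ s, ((G.neighborFinset u ∩ t).card : ℝ) * g := by
  apply Finset.sum_le_sum
  intro u _
  rw [← sum_ite_adj G t u g]
  apply Finset.sum_le_sum
  intro w _
  by_cases h : G.Adj u w
  · simp only [h, if_true]
    exact hlip u w h
  · simp [h]

end Aux

/-- Eigenvalue bound: for an amply regular graph with `β > α ≥ 1`, every eigenvalue of
the adjacency matrix other than the top eigenvalue `d` is at most `d - 3`. -/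
theorem stmt15 [Fintype V] [DecidableEq V] (G : SimpleGraph V) [DecidableRel G.Adj]
    (hconn : G.Connected) (n d α β : ℕ) (h : IsAmplyRegular G n d α β)
    (hβα : α < β) (hα : 1 ≤ α) :
    ∀ μ : ℝ, μ ∈ spectrum ℝ (G.adjMatrix ℝ) → μ = d ∨ μ ≤ (d : ℝ) - 3 := by
  intro μ hμ
  obtain ⟨-, hreg, hA, hB⟩ := h
  rw [spectrum.mem_iff] at hμ
  have hdet : (algebraMap ℝ (Matrix V V ℝ) μ - G.adjMatrix ℝ).det = 0 := by
    by_contra hd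
    exact hμ ((Matrix.isUnit_iff_isUnit_det _).2 (isUnit_iff_ne_zero.2 hd))
  obtain ⟨f, hf0, hfe⟩ := (Matrix.exists_mulVec_eq_zero_iff).2 hdet
  have heig : ∀ v : V, ∑ u ∈ G.neighborFinset v, f u = μ * f v := by
    intro v
    have h2 : (algebraMap ℝ (Matrix V V ℝ) μ).mulVec f = μ • f := by
      rw [Algebra.algebraMap_eq_smul_one, Matrix.smul_mulVec, Matrix.one_mulVec]
    have h1 : ((algebraMap ℝ (Matrix V V ℝ) μ - G.adjMatrix ℝ).mulVec f) v = 0 := by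
      rw [hfe]; rfl
    rw [Matrix.sub_mulVec, h2] at h1
    simp only [Pi.sub_apply, Pi.smul_apply, smul_eq_mul,
      SimpleGraph.adjMatrix_mulVec_apply] at h1
    linarith
  by_cases hconst : ∀ a b : V, G.Adj a b → f a = f b
  · left
    have hvex : ∃ v : V, f v ≠ 0 := by
      by_contra hc
      push_neg at hc
      exact hf0 (funext hc)
    obtain ⟨v, hv⟩ := hvex
    have hsum : ∑ u ∈ G.neighborFinset v, f u = (d : ℝ) * f v := by
      have hc : ∀ u ∈ G.neighborFinset v, f u = f v := by
        intro u hu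
        exact (hconst v u ((SimpleGraph.mem_neighborFinset G v u).mp hu)).symm
      rw [Finset.sum_congr rfl hc, Finset.sum_const, nsmul_eq_mul]
      have hcard : (G.neighborFinset v).card = d := hreg v
      rw [hcard]
    have hev := heig v
    rw [hsum] at hev
    exact mul_right_cancel₀ hv (by linarith)
  · right
    push_neg at hconst
    obtain ⟨a, b, hab, hfab⟩ := hconst
    obtain ⟨p, hp, hmax⟩ := Finset.exists_max_image
      (Finset.univ.filter (fun p : V × V => G.Adj p.1 p.2)) (fun p => f p.1 - f p.2)
      ⟨(a, b), by simp [hab]⟩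
    obtain ⟨x, y⟩ := p
    have hxy : G.Adj x y := by simpa using hp
    set g : ℝ := f x - f y with hg
    have hlip : ∀ c e : V, G.Adj c e → f c - f e ≤ g := by
      intro c e hce
      exact hmax (c, e) (by simp [hce])
    have hgpos : 0 < g := by
      rcases lt_or_gt_of_ne hfab with hlt | hgt
      · have := hlip b a hab.symm; linarith
      · have := hlip a b hab; linarith
    set X := Nside G x y with hX
    set Y := Nside G y x with hY
    set D := Delta G x y with hD
    have hDsymm : Delta G y x = D := delta_symm G x y
    have hcardD : D.card = α := hA x y hxy
    have hcardX : 1 + (α + X.card) = d := by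
      have hcs := card_split G hxy
      rw [← hD, ← hX, hcardD] at hcs
      have hdd : (G.neighborFinset x).card = d := hreg x
      omega
    have hXmem : ∀ u ∈ X, G.Adj x u ∧ u ≠ y ∧ ¬ G.Adj y u := by
      intro u hu
      rw [hX] at hu
      simp only [Nside, Finset.mem_sdiff, Finset.mem_insert,
        SimpleGraph.mem_neighborFinset] at hu
      exact ⟨hu.1, fun hc => hu.2 (Or.inl hc), fun hc => hu.2 (Or.inr hc)⟩
    have hYmem : ∀ w ∈ Y, G.Adj y w ∧ w ≠ x ∧ ¬ G.Adj x w := by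
      intro w hw
      rw [hY] at hw
      simp only [Nside, Finset.mem_sdiff, Finset.mem_insert,
        SimpleGraph.mem_neighborFinset] at hw
      exact ⟨hw.1, fun hc => hw.2 (Or.inl hc), fun hc => hw.2 (Or.inr hc)⟩
    have hDmem : ∀ z ∈ D, G.Adj x z ∧ G.Adj y z := by
      intro z hz
      rw [hD] at hz
      simp only [Delta, Finset.mem_inter, SimpleGraph.mem_neighborFinset] at hz
      exact hz
    have F2 : ∀ u ∈ X,
        1 + ((G.neighborFinset u ∩ D).card + (G.neighborFinset u ∩ Y).card) = β := by
      intro u hu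
      obtain ⟨hxu, hne, hny⟩ := hXmem u hu
      have hd2 : G.dist u y = 2 :=
        dist_two G hconn hxy hxu.symm hne (fun hc => hny hc.symm)
      have hcnt := cnt G hxy hxu.symm
      rw [hDsymm, ← hY, hB u y hd2] at hcnt
      omega
    have F3 : ∀ w ∈ Y,
        1 + ((G.neighborFinset w ∩ D).card + (G.neighborFinset w ∩ X).card) = β := by
      intro w hw
      obtain ⟨hyw, hne, hnx⟩ := hYmem w hw
      have hd2 : G.dist w x = 2 :=
        dist_two G hconn hxy.symm hyw.symm hne (fun hc => hnx hc.symm)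
      have hcnt := cnt G hxy.symm hyw.symm
      rw [← hD, ← hX, hB w x hd2] at hcnt
      omega
    have F4 : ∀ z ∈ D, (G.neighborFinset z ∩ X).card = (G.neighborFinset z ∩ Y).card
        ∧ (G.neighborFinset z ∩ Y).card + 1 ≤ α := by
      intro z hz
      obtain ⟨hxz, hyz⟩ := hDmem z hz
      have h1 := cnt G hxy hxz.symm
      have h2 := cnt G hxy.symm hyz.symm
      rw [hDsymm, ← hY, hA z y hyz.symm] at h1
      rw [← hD, ← hX, hA z x hxz.symm] at h2
      omega
    have F2R : ∀ u ∈ X, ((G.neighborFinset u ∩ Y).card : ℝ)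
        + ((G.neighborFinset u ∩ D).card : ℝ) = (β : ℝ) - 1 := by
      intro u hu
      have hn := F2 u hu
      have hcast : (1 : ℝ) + (((G.neighborFinset u ∩ D).card : ℝ)
          + ((G.neighborFinset u ∩ Y).card : ℝ)) = (β : ℝ) := by
        exact_mod_cast congrArg (Nat.cast : ℕ → ℝ) hn
      linarith
    have F3R : ∀ w ∈ Y, ((G.neighborFinset w ∩ X).card : ℝ)
        + ((G.neighborFinset w ∩ D).card : ℝ) = (β : ℝ) - 1 := by
      intro w hw
      have hn := F3 w hw
      have hcast : (1 : ℝ) + (((G.neighborFinset w ∩ D).card : ℝ)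
          + ((G.neighborFinset w ∩ X).card : ℝ)) = (β : ℝ) := by
        exact_mod_cast congrArg (Nat.cast : ℕ → ℝ) hn
      linarith
    have hb2R : (0 : ℝ) < (β : ℝ) - 1 := by
      have h2n : (2 : ℕ) ≤ β := by omega
      have : (2 : ℝ) ≤ (β : ℝ) := by exact_mod_cast h2n
      linarith
    have hE : (∑ u ∈ X, ∑ w ∈ Y, (if G.Adj u w then f u - f w else 0))
        + (∑ u ∈ X, ∑ z ∈ D, (if G.Adj u z then f u - f z else 0))
        + (∑ z ∈ D, ∑ w ∈ Y, (if G.Adj z w then f z - f w else 0))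
        = ((β : ℝ) - 1) * (∑ u ∈ X, f u - ∑ w ∈ Y, f w) := by
      rw [pair_sum, pair_sum, pair_sum]
      have e1 : ∑ u ∈ X, ((G.neighborFinset u ∩ Y).card : ℝ) * f u
          + ∑ u ∈ X, ((G.neighborFinset u ∩ D).card : ℝ) * f u
          = ((β : ℝ) - 1) * ∑ u ∈ X, f u := by
        rw [Finset.mul_sum, ← Finset.sum_add_distrib]
        apply Finset.sum_congr rfl
        intro u hu
        rw [← add_mul, F2R u hu]
      have e2 : ∑ w ∈ Y, ((G.neighborFinset w ∩ X).card : ℝ) * f w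
          + ∑ w ∈ Y, ((G.neighborFinset w ∩ D).card : ℝ) * f w
          = ((β : ℝ) - 1) * ∑ w ∈ Y, f w := by
        rw [Finset.mul_sum, ← Finset.sum_add_distrib]
        apply Finset.sum_congr rfl
        intro w hw
        rw [← add_mul, F3R w hw]
      have e3 : ∑ z ∈ D, ((G.neighborFinset z ∩ X).card : ℝ) * f z
          = ∑ z ∈ D, ((G.neighborFinset z ∩ Y).card : ℝ) * f z := by
        apply Finset.sum_congr rfl
        intro z hz
        rw [(F4 z hz).1]
      have edist : ((β : ℝ) - 1) * (∑ u ∈ X, f u - ∑ w ∈ Y, f w)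
          = ((β : ℝ) - 1) * ∑ u ∈ X, f u - ((β : ℝ) - 1) * ∑ w ∈ Y, f w := by ring
      linarith [e1, e2, e3, edist]
    have hbound : (∑ u ∈ X, ∑ w ∈ Y, (if G.Adj u w then f u - f w else 0))
        + (∑ u ∈ X, ∑ z ∈ D, (if G.Adj u z then f u - f z else 0))
        + (∑ z ∈ D, ∑ w ∈ Y, (if G.Adj z w then f z - f w else 0))
        ≤ ((β : ℝ) - 1) * (((X.card : ℝ) + ((α : ℝ) - 1)) * g) := by
      have b1 := pair_bound G X Y f hgpos.le hlip
      have b2 := pair_bound G X D f hgpos.le hlip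
      have b3 := pair_bound G D Y f hgpos.le hlip
      have c12 : ∑ u ∈ X, ((G.neighborFinset u ∩ Y).card : ℝ) * g
          + ∑ u ∈ X, ((G.neighborFinset u ∩ D).card : ℝ) * g
          = (X.card : ℝ) * (((β : ℝ) - 1) * g) := by
        rw [← Finset.sum_add_distrib]
        have hc : ∀ u ∈ X, ((G.neighborFinset u ∩ Y).card : ℝ) * g
            + ((G.neighborFinset u ∩ D).card : ℝ) * g = ((β : ℝ) - 1) * g := by
          intro u hu
          rw [← add_mul, F2R u hu]
        rw [Finset.sum_congr rfl hc, Finset.sum_const, nsmul_eq_mul]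
      have c3 : ∑ z ∈ D, ((G.neighborFinset z ∩ Y).card : ℝ) * g
          ≤ ((β : ℝ) - 1) * (((α : ℝ) - 1) * g) := by
        have hstep : ∑ z ∈ D, ((G.neighborFinset z ∩ Y).card : ℝ) * g
            ≤ ∑ _z ∈ D, ((α : ℝ) - 1) * g := by
          apply Finset.sum_le_sum
          intro z hz
          have hn := (F4 z hz).2
          have hcast : ((G.neighborFinset z ∩ Y).card : ℝ) + 1 ≤ (α : ℝ) := by
            exact_mod_cast hn
          apply mul_le_mul_of_nonneg_right _ hgpos.le
          linarith
        have hconst : ∑ _z ∈ D, ((α : ℝ) - 1) * g = (α : ℝ) * (((α : ℝ) - 1) * g) := by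
          rw [Finset.sum_const, nsmul_eq_mul, hcardD]
        have haβ : (α : ℝ) ≤ (β : ℝ) - 1 := by
          have : α + 1 ≤ β := hβα
          have hcast : (α : ℝ) + 1 ≤ (β : ℝ) := by exact_mod_cast this
          linarith
        have hnn : (0 : ℝ) ≤ ((α : ℝ) - 1) * g := by
          have : (1 : ℝ) ≤ (α : ℝ) := by exact_mod_cast hα
          have := hgpos.le
          nlinarith
        calc ∑ z ∈ D, ((G.neighborFinset z ∩ Y).card : ℝ) * g
            ≤ ∑ _z ∈ D, ((α : ℝ) - 1) * g := hstep
          _ = (α : ℝ) * (((α : ℝ) - 1) * g) := hconst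
          _ ≤ ((β : ℝ) - 1) * (((α : ℝ) - 1) * g) :=
              mul_le_mul_of_nonneg_right haβ hnn
      have hring : (X.card : ℝ) * (((β : ℝ) - 1) * g)
          + ((β : ℝ) - 1) * (((α : ℝ) - 1) * g)
          = ((β : ℝ) - 1) * (((X.card : ℝ) + ((α : ℝ) - 1)) * g) := by ring
      linarith [b1, b2, b3, c12, c3, hring]
    have hMain : ∑ u ∈ X, f u - ∑ w ∈ Y, f w ≤ ((X.card : ℝ) + ((α : ℝ) - 1)) * g := by
      refine le_of_mul_le_mul_left ?_ hb2R
      rw [← hE]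
      exact hbound
    have hx := heig x
    have hy := heig y
    rw [sum_split G hxy f, ← hD, ← hX] at hx
    rw [sum_split G hxy.symm f, hDsymm, ← hY] at hy
    have hXR : (X.card : ℝ) = (d : ℝ) - 1 - (α : ℝ) := by
      have hcast : ((1 + (α + X.card) : ℕ) : ℝ) = (d : ℝ) := by
        exact_mod_cast congrArg (Nat.cast : ℕ → ℝ) hcardX
      push_cast at hcast
      linarith
    have hmulg : μ * g = μ * f x - μ * f y := by rw [hg]; ring
    have h2 : ((X.card : ℝ) + ((α : ℝ) - 1)) * g = ((d : ℝ) - 2) * g := by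
      rw [hXR]; ring
    have hfinal : μ * g ≤ ((d : ℝ) - 3) * g := by
      have h1 : f y - f x = -g := by rw [hg]; ring
      nlinarith [hMain, hx, hy, hmulg, h1, h2]
    exact le_of_mul_le_mul_right hfinal hgpos
end

section
/- Let G be an amply regular graph with girth 4, i.e., parameters (n, d, 0, β) with β ≥ 2 and G containing no triangles. Then for every edge xy ∈ E, the Lin-Lu-Yau curvature satisfies κ(x,y) = 2/d. -/
open Filter Topology
open scoped Classical

variable {V : Type*}

/-- The L¹-Wasserstein (optimal transport) distance between two probability
measures on the vertex set of a graph, with respect to the graph distance. -/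
noncomputable def wassDist (G : SimpleGraph V) (μ ν : V → ℝ) : ℝ :=
  sInf {c : ℝ | ∃ π : V → V → ℝ, (∀ u v, 0 ≤ π u v) ∧
    (∀ u, ∑ᶠ v, π u v = μ u) ∧ (∀ v, ∑ᶠ u, π u v = ν v) ∧
    c = ∑ᶠ u, ∑ᶠ v, (G.dist u v : ℝ) * π u v}

/-- The probability measure `μ_x^p` with idleness `p` around vertex `x`. -/
noncomputable def muIdle (G : SimpleGraph V) [G.LocallyFinite] (p : ℝ) (x : V) : V → ℝ :=
  fun v => if v = x then p else if G.Adj x v then (1 - p) / (G.degree x : ℝ) else 0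

/-- The `p`-Ollivier-Ricci curvature `κ_p(x,y)`. -/
noncomputable def ollivier (G : SimpleGraph V) [G.LocallyFinite] (p : ℝ) (x y : V) : ℝ :=
  1 - wassDist G (muIdle G p x) (muIdle G p y) / (G.dist x y : ℝ)

/-- The Lin-Lu-Yau curvature `κ(x,y) = lim_{p→1} κ_p(x,y)/(1-p)`. -/
noncomputable def lly (G : SimpleGraph V) [G.LocallyFinite] (x y : V) : ℝ :=
  limUnder (𝓝[<] (1 : ℝ)) (fun p => ollivier G p x y / (1 - p))

/-!
Write `q = (1 - p) / d`, `A = N(x) \ {y}` and `B = N(y) \ {x}`. Each `a ∈ A` is at distance 2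
from `y`, and since there are no triangles its `β` common neighbours with `y` are `x` and `β - 1`
vertices of `B`; symmetrically for `B`. So `A` and `B` span a `(β - 1)`-regular bipartite graph,
which has a perfect matching by Hall's theorem. Transport `μ_x^p` to `μ_y^p` by leaving `q` at `x`
and at `y`, moving `p - q` from `x` to `y`, and moving `q` along each matching edge; this costs
`(p - q) + (d - 1) q = 1 - 2 (1 - p) / d`. The potential `dist(·, y)` is 1-Lipschitz and drops by
exactly the length of every step of this plan, so the plan is optimal and
`κ_p(x, y) = 2 (1 - p) / d` as soon as `q ≤ p`.
-/

open Finset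

section Transport

variable [Fintype V] (G : SimpleGraph V)

def IsCoupling (π : V → V → ℝ) (μ ν : V → ℝ) : Prop :=
  (∀ u v, 0 ≤ π u v) ∧ (∀ u, ∑ v, π u v = μ u) ∧ (∀ v, ∑ u, π u v = ν v)

noncomputable def transportCost (π : V → V → ℝ) : ℝ :=
  ∑ u, ∑ v, (G.dist u v : ℝ) * π u v

variable {G} {π : V → V → ℝ} {μ ν : V → ℝ}

lemma IsCoupling.sum_sub_mul (hπ : IsCoupling π μ ν) (f : V → ℝ) :
    ∑ u, ∑ v, (f u - f v) * π u v = ∑ u, f u * μ u - ∑ v, f v * ν v := by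
  obtain ⟨-, hrow, hcol⟩ := hπ
  simp only [sub_mul, sum_sub_distrib, ← mul_sum, hrow]
  rw [sum_comm (f := fun u v => f v * π u v)]
  simp only [← mul_sum, hcol]

lemma IsCoupling.mem_wassDist_set (hπ : IsCoupling π μ ν) :
    transportCost G π ∈ {c : ℝ | ∃ π : V → V → ℝ, (∀ u v, 0 ≤ π u v) ∧
      (∀ u, ∑ᶠ v, π u v = μ u) ∧ (∀ v, ∑ᶠ u, π u v = ν v) ∧
      c = ∑ᶠ u, ∑ᶠ v, (G.dist u v : ℝ) * π u v} :=
  ⟨π, hπ.1, by simpa only [finsum_eq_sum_of_fintype] using hπ.2.1,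
    by simpa only [finsum_eq_sum_of_fintype] using hπ.2.2,
    by simp only [transportCost, finsum_eq_sum_of_fintype]⟩

lemma wassDist_le_transportCost (hπ : IsCoupling π μ ν) :
    wassDist G μ ν ≤ transportCost G π := by
  refine csInf_le ⟨0, ?_⟩ hπ.mem_wassDist_set
  rintro c ⟨π', hpos, -, -, rfl⟩
  simp only [finsum_eq_sum_of_fintype]
  exact sum_nonneg fun u _ => sum_nonneg fun v _ =>
    mul_nonneg (Nat.cast_nonneg _) (hpos u v)

/-- The easy half of Kantorovich duality: a 1-Lipschitz potential that is tight on the support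
of `π` certifies that `π` is optimal. -/
lemma wassDist_eq_transportCost (hπ : IsCoupling π μ ν) (f : V → ℝ)
    (hf : ∀ u v, f u - f v ≤ G.dist u v) (hslack : ∀ u v, π u v ≠ 0 → f u - f v = G.dist u v) :
    wassDist G μ ν = transportCost G π := by
  refine (wassDist_le_transportCost hπ).antisymm (le_csInf ⟨_, hπ.mem_wassDist_set⟩ ?_)
  rintro c ⟨π', hpos, hrow, hcol, rfl⟩
  simp only [finsum_eq_sum_of_fintype] at hrow hcol ⊢
  have hπ' : IsCoupling π' μ ν := ⟨hpos, hrow, hcol⟩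
  calc transportCost G π = ∑ u, ∑ v, (f u - f v) * π u v := by
        refine sum_congr rfl fun u _ => sum_congr rfl fun v _ => ?_
        by_cases h : π u v = 0
        · simp [h]
        · rw [hslack u v h]
    _ = ∑ u, ∑ v, (f u - f v) * π' u v := by rw [hπ.sum_sub_mul, hπ'.sum_sub_mul]
    _ ≤ ∑ u, ∑ v, (G.dist u v : ℝ) * π' u v :=
        sum_le_sum fun u _ => sum_le_sum fun v _ =>
          mul_le_mul_of_nonneg_right (hf u v) (hpos u v)

variable [DecidableEq V]

def matchingPlan (x y : V) (c r : ℝ) (S : Finset V) (σ : V → V) : V → V → ℝ :=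
  fun u v => (if u = x ∧ v = y then c else 0) + (if u ∈ S ∧ v = σ u then r else 0)

variable {x y : V} {c r : ℝ} {S : Finset V} {σ : V → V}

lemma isCoupling_matchingPlan (hc : 0 ≤ c) (hr : 0 ≤ r) (hσ : Set.InjOn σ S) :
    IsCoupling (matchingPlan x y c r S σ)
      (fun u => (if u = x then c else 0) + if u ∈ S then r else 0)
      (fun v => (if v = y then c else 0) + if v ∈ S.image σ then r else 0) := by
  refine ⟨fun u v => ?_, fun u => ?_, fun v => ?_⟩
  · unfold matchingPlan
    positivity
  · simp only [matchingPlan, sum_add_distrib, ite_and, sum_ite_irrel,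
      sum_ite_eq', mem_univ, if_true, sum_const_zero]
  · have hcol : ∑ u, (if u ∈ S ∧ v = σ u then r else 0) = if v ∈ S.image σ then r else 0 := by
      rw [← sum_ite_eq' (S.image σ) v (fun _ => r), sum_image hσ]
      simp [ite_and, eq_comm]
    simp only [matchingPlan, sum_add_distrib, hcol]
    simp [ite_and]

lemma transportCost_matchingPlan :
    transportCost G (matchingPlan x y c r S σ) =
      c * G.dist x y + r * ∑ u ∈ S, (G.dist u (σ u) : ℝ) := by
  simp only [transportCost, matchingPlan, mul_add, sum_add_distrib, ite_and, mul_ite, mul_zero,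
    sum_ite_irrel, sum_ite_eq', mem_univ, if_true, sum_const_zero]
  simp [mul_sum, mul_comm]

lemma wassDist_eq_of_matching (hc : 0 ≤ c) (hr : 0 ≤ r) (hσ : Set.InjOn σ S) (f : V → ℝ)
    (hf : ∀ u v, f u - f v ≤ G.dist u v) (hfxy : f x - f y = G.dist x y)
    (hfS : ∀ u ∈ S, f u - f (σ u) = G.dist u (σ u)) :
    wassDist G (fun u => (if u = x then c else 0) + if u ∈ S then r else 0)
      (fun v => (if v = y then c else 0) + if v ∈ S.image σ then r else 0) =
      c * G.dist x y + r * ∑ u ∈ S, (G.dist u (σ u) : ℝ) := by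
  rw [wassDist_eq_transportCost (isCoupling_matchingPlan hc hr hσ) f hf,
    transportCost_matchingPlan]
  intro u v h
  by_cases hxy : u = x ∧ v = y
  · obtain ⟨rfl, rfl⟩ := hxy
    exact hfxy
  by_cases hS : u ∈ S ∧ v = σ u
  · obtain ⟨hu, rfl⟩ := hS
    exact hfS u hu
  simp [matchingPlan, hxy, hS] at h

end Transport

lemma muIdle_eq_of_degree [Fintype V] [DecidableEq V] (G : SimpleGraph V) [DecidableRel G.Adj]
    {d : ℕ} {x : V} (hx : G.degree x = d) (p : ℝ) :
    muIdle G p x = fun u => (if u = x then p - (1 - p) / d else 0) +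
      if u ∈ insert x (G.neighborFinset x) then (1 - p) / d else 0 := by
  funext u
  by_cases hu : u = x
  · simp [muIdle, hu]
  · simp [muIdle, hu, hx]

theorem Finset.exists_injOn_of_bipartite_card_le {α : Type*} [DecidableEq α] (r : α → α → Prop)
    [DecidableRel r] {A B : Finset α} {k : ℕ} (hk : 0 < k)
    (hA : ∀ a ∈ A, k ≤ #(B.bipartiteAbove r a)) (hB : ∀ b ∈ B, #(A.bipartiteBelow r b) ≤ k) :
    ∃ f : α → α, Set.InjOn f A ∧ ∀ a ∈ A, f a ∈ B ∧ r a (f a) := by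
  have hall : ∀ s : Finset A, #s ≤ #(s.biUnion fun a => B.bipartiteAbove r a) := by
    intro s
    set T := s.biUnion fun a => B.bipartiteAbove r a
    refine Nat.le_of_mul_le_mul_right (card_mul_le_card_mul (fun (a : A) b => r a b) (s := s)
      (t := T) (m := k) (n := k) (fun a ha => ?_) (fun b hb => ?_)) hk
    · refine (hA a a.2).trans (card_le_card fun b hb => ?_)
      exact mem_filter.mpr ⟨mem_biUnion.mpr ⟨a, ha, hb⟩, (mem_filter.mp hb).2⟩
    · obtain ⟨a₀, -, hb₀⟩ := mem_biUnion.mp hb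
      refine le_trans ?_ (hB b (mem_filter.mp hb₀).1)
      rw [← card_map (Function.Embedding.subtype _)]
      refine card_le_card fun a ha => ?_
      obtain ⟨a', ha', rfl⟩ := mem_map.mp ha
      exact mem_filter.mpr ⟨a'.2, (mem_filter.mp ha').2⟩
  obtain ⟨g, hg, hgr⟩ := (all_card_le_biUnion_card_iff_exists_injective _).mp hall
  refine ⟨fun u => if h : u ∈ A then g ⟨u, h⟩ else u, fun a ha b hb hab => ?_, fun a ha => ?_⟩
  · simp only [mem_coe] at ha hb
    exact congrArg Subtype.val (hg (by simpa [ha, hb] using hab))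
  · simpa [ha] using mem_filter.mp (hgr ⟨a, ha⟩)

namespace SimpleGraph

variable {G : SimpleGraph V}

lemma dist_eq_two_of_adj_of_adj {u v w : V} (huv : G.Adj u v) (hvw : G.Adj v w) (hne : u ≠ w)
    (hnadj : ¬G.Adj u w) : G.dist u w = 2 := by
  have : G.edist u w = 2 := edist_eq_two_iff.mpr ⟨hne, hnadj, v, huv, hvw.symm⟩
  simp [dist, this]

variable [Fintype V] [DecidableEq V] [DecidableRel G.Adj] {d β : ℕ} {x y : V}

lemma card_filter_adj_erase {u v w : V}
    (huw : G.Adj u w) (hwv : G.Adj w v) :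
    #{b ∈ (G.neighborFinset v).erase w | G.Adj u b} =
      #(G.neighborFinset u ∩ G.neighborFinset v) - 1 := by
  have : {b ∈ (G.neighborFinset v).erase w | G.Adj u b} =
      (G.neighborFinset u ∩ G.neighborFinset v).erase w := by
    ext b
    simp only [mem_filter, mem_erase, mem_inter, mem_neighborFinset]
    tauto
  rw [this, card_erase_of_mem (by simpa using ⟨huw, hwv.symm⟩)]

lemma exists_matching_neighborFinset_erase (hreg : G.IsRegularOfDegree d)
    (hb : ∀ x y : V, G.dist x y = 2 → #(G.neighborFinset x ∩ G.neighborFinset y) = β)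
    (hβ : 2 ≤ β) (htri : ∀ u v w : V, G.Adj u v → G.Adj v w → ¬G.Adj u w) (hxy : G.Adj x y) :
    ∃ f : V → V, Set.InjOn f ((G.neighborFinset x).erase y) ∧
      ((G.neighborFinset x).erase y).image f = (G.neighborFinset y).erase x ∧
      ∀ a ∈ (G.neighborFinset x).erase y, G.Adj a (f a) := by
  have hcommon : ∀ u v w, G.Adj u w → G.Adj w v → u ≠ v →
      #{b ∈ (G.neighborFinset v).erase w | G.Adj u b} = β - 1 := fun u v w huw hwv hne => by
    rw [card_filter_adj_erase huw hwv,
      hb u v (dist_eq_two_of_adj_of_adj huw hwv hne (htri u w v huw hwv))]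
  obtain ⟨f, hinj, hf⟩ := Finset.exists_injOn_of_bipartite_card_le G.Adj
    (A := (G.neighborFinset x).erase y) (B := (G.neighborFinset y).erase x) (k := β - 1)
    (by omega)
    (fun a ha => (hcommon a y x (G.adj_symm ((mem_neighborFinset _ _ _).mp (mem_of_mem_erase ha)))
      hxy (ne_of_mem_erase ha)).ge)
    (fun b hb => by
      simp only [bipartiteBelow, ← G.adj_comm b]
      exact (hcommon b x y (G.adj_symm ((mem_neighborFinset _ _ _).mp (mem_of_mem_erase hb)))
        hxy.symm (ne_of_mem_erase hb)).le)
  have hcard : ∀ {u v}, G.Adj u v → #((G.neighborFinset u).erase v) = d - 1 := fun huv => by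
    rw [card_erase_of_mem ((mem_neighborFinset _ _ _).mpr huv), card_neighborFinset_eq_degree,
      hreg]
  refine ⟨f, hinj, eq_of_subset_of_card_le (image_subset_iff.mpr fun a ha => (hf a ha).1) ?_,
    fun a ha => (hf a ha).2⟩
  rw [card_image_of_injOn hinj, hcard hxy, hcard hxy.symm]

lemma exists_matching_insert_neighborFinset (hreg : G.IsRegularOfDegree d)
    (hb : ∀ x y : V, G.dist x y = 2 → #(G.neighborFinset x ∩ G.neighborFinset y) = β)
    (hβ : 2 ≤ β) (htri : ∀ u v w : V, G.Adj u v → G.Adj v w → ¬G.Adj u w) (hxy : G.Adj x y) :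
    ∃ σ : V → V, Set.InjOn σ ↑(insert x (G.neighborFinset x)) ∧
      (insert x (G.neighborFinset x)).image σ = insert y (G.neighborFinset y) ∧
      σ x = x ∧ σ y = y ∧ ∀ a ∈ (G.neighborFinset x).erase y, G.Adj a (σ a) ∧ G.Adj (σ a) y := by
  obtain ⟨f, -, himage, hadj⟩ := exists_matching_neighborFinset_erase hreg hb hβ htri hxy
  set A := (G.neighborFinset x).erase y
  have hxA : x ∉ A := fun h =>
    G.loopless.irrefl x ((mem_neighborFinset _ _ _).mp (mem_of_mem_erase h))
  have hyA : y ∉ A := notMem_erase y _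
  have hσA : ∀ a ∈ A, A.piecewise f id a = f a := fun a ha => piecewise_eq_of_mem _ _ _ ha
  have himage' : (insert x (G.neighborFinset x)).image (A.piecewise f id) =
      insert y (G.neighborFinset y) := by
    rw [← insert_erase ((mem_neighborFinset _ _ _).mpr hxy), image_insert, image_insert,
      piecewise_eq_of_notMem _ _ _ hxA, piecewise_eq_of_notMem _ _ _ hyA, image_congr hσA,
      himage, id, id, insert_comm, insert_erase ((mem_neighborFinset _ _ _).mpr hxy.symm)]
  have hfy : ∀ a ∈ A, G.Adj (f a) y := fun a ha => by
    have : f a ∈ (G.neighborFinset y).erase x := himage ▸ mem_image_of_mem f ha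
    exact G.adj_symm ((mem_neighborFinset _ _ _).mp (mem_of_mem_erase this))
  refine ⟨A.piecewise f id, injOn_of_card_image_eq ?_, himage',
    piecewise_eq_of_notMem _ _ _ hxA, piecewise_eq_of_notMem _ _ _ hyA,
    fun a ha => hσA a ha ▸ ⟨hadj a ha, hfy a ha⟩⟩
  rw [himage', card_insert_of_notMem (G.notMem_neighborFinset_self x),
    card_insert_of_notMem (G.notMem_neighborFinset_self y), card_neighborFinset_eq_degree,
    card_neighborFinset_eq_degree, hreg x, hreg y]

lemma wassDist_muIdle_of_adj (hconn : G.Connected) (hreg : G.IsRegularOfDegree d)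
    (hb : ∀ x y : V, G.dist x y = 2 → #(G.neighborFinset x ∩ G.neighborFinset y) = β)
    (hβ : 2 ≤ β) (htri : ∀ u v w : V, G.Adj u v → G.Adj v w → ¬G.Adj u w) (hxy : G.Adj x y)
    {p : ℝ} (hp : (1 - p) / d ≤ p) (hp1 : p ≤ 1) :
    wassDist G (muIdle G p x) (muIdle G p y) = 1 - 2 * (1 - p) / d := by
  obtain ⟨σ, hinj, himage, hσx, hσy, hadj⟩ :=
    exists_matching_insert_neighborFinset hreg hb hβ htri hxy
  have hd : 1 ≤ d := hreg x ▸ hxy.degree_pos_left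
  have hNx := insert_erase ((mem_neighborFinset _ _ _).mpr hxy)
  have hyA : y ∉ (G.neighborFinset x).erase y := notMem_erase y _
  have hxA : x ∉ insert y ((G.neighborFinset x).erase y) :=
    hNx.symm ▸ G.notMem_neighborFinset_self x
  have hdistA : ∀ a ∈ (G.neighborFinset x).erase y, G.dist a (σ a) = 1 ∧ G.dist (σ a) y = 1 ∧
      G.dist a y = 2 := fun a ha => by
    have hxa := (mem_neighborFinset _ _ _).mp (mem_of_mem_erase ha)
    exact ⟨dist_eq_one_iff_adj.mpr (hadj a ha).1, dist_eq_one_iff_adj.mpr (hadj a ha).2,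
      dist_eq_two_of_adj_of_adj hxa.symm hxy (ne_of_mem_erase ha) (htri a x y hxa.symm hxy)⟩
  rw [muIdle_eq_of_degree G (hreg x) p, muIdle_eq_of_degree G (hreg y) p, ← himage,
    wassDist_eq_of_matching (sub_nonneg.mpr hp) (by bound) hinj (fun v => G.dist v y)]
  · rw [← hNx, sum_insert hxA, sum_insert hyA, hσx, hσy,
      sum_congr rfl fun a ha => by rw [(hdistA a ha).1], sum_const,
      card_erase_of_mem ((mem_neighborFinset _ _ _).mpr hxy), card_neighborFinset_eq_degree,
      hreg x, dist_eq_one_iff_adj.mpr hxy, dist_self, dist_self, nsmul_eq_mul, Nat.cast_sub hd]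
    have : (d : ℝ) ≠ 0 := by positivity
    field_simp
    ring
  · intro u v
    rw [sub_le_iff_le_add]
    exact_mod_cast hconn.dist_triangle
  · simp
  · rw [← hNx]
    intro u hu
    rcases mem_insert.mp hu with rfl | hu
    · simp [hσx]
    rcases mem_insert.mp hu with rfl | ha
    · simp [hσy]
    obtain ⟨h1, h2, h3⟩ := hdistA u ha
    rw [h1, h2, h3]
    norm_num

end SimpleGraph

lemma lly_eq_of_eventually_ollivier_eq (G : SimpleGraph V) [G.LocallyFinite] (x y : V) (c : ℝ)
    (h : ∀ᶠ p in 𝓝[<] 1, ollivier G p x y = c * (1 - p)) : lly G x y = c := by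
  refine Tendsto.limUnder_eq (tendsto_const_nhds.congr' ?_)
  filter_upwards [h, self_mem_nhdsWithin] with p hp hp1
  rw [hp, mul_div_cancel_right₀ _ (sub_ne_zero.mpr (ne_of_gt hp1))]

/-- For an amply regular graph of girth 4 (parameters `(n, d, 0, β)`, `β ≥ 2`,
no triangles), every edge has Lin-Lu-Yau curvature exactly `2/d`. -/
theorem stmt16 [Fintype V] [DecidableEq V] (G : SimpleGraph V) [DecidableRel G.Adj]
    (hconn : G.Connected) (n d β : ℕ) (h : IsAmplyRegular G n d 0 β) (hβ : 2 ≤ β)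
    (htri : ∀ u v w : V, G.Adj u v → G.Adj v w → ¬G.Adj u w)
    (x y : V) (hxy : G.Adj x y) :
    lly G x y = 2 / (d : ℝ) := by
  obtain ⟨-, hreg, -, hb⟩ := h
  have hd : (0 : ℝ) < d := by exact_mod_cast hreg x ▸ hxy.degree_pos_left
  apply lly_eq_of_eventually_ollivier_eq
  have hlt : 1 / ((d : ℝ) + 1) < 1 := by rw [div_lt_one (by linarith)]; linarith
  filter_upwards [Ioo_mem_nhdsLT hlt] with p ⟨hp, hp1⟩
  have hp' : (1 - p) / d ≤ p := by
    rw [div_lt_iff₀ (by linarith)] at hp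
    rw [div_le_iff₀ hd]
    linarith
  rw [ollivier, SimpleGraph.wassDist_muIdle_of_adj hconn hreg hb hβ htri hxy hp' hp1.le,
    SimpleGraph.dist_eq_one_iff_adj.mpr hxy]
  field_simp
  ring
end
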